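/- Let n₅ be the Lie algebra structure on ℝ⁷ with nonzero brackets [e₁,e₂] = −√2 e₃, [e₁,e₃] = −e₆, [e₁,e₄] = −e₇, [e₂,e₅] = −√2 e₇. Let φ₅ = e^{134}+e^{457}−e^{246}−e^{125}−e^{356}+e^{167}−e^{237}, τ₅ = −e^{46} + e^{37} − √2 e^{35} + √2 e^{17}, λ = 9, and let D be the endomorphism with De₁ = −e₁ + √2 e₃, De₂ = −2e₂, De₃ = −3e₃, De₄ = −3e₄, De₅ = −2e₅ − √2 e₇, De₆ = −4e₆, De₇ = −4e₇. Then: (i) dφ₅ = 0; (ii) D is a derivation of n₅; (iii) dτ₅ = 2e^{134} + √2 e^{127} + √2 e^{235} − 4e^{125}; and (iv) λφ₅ + L_D φ₅ = 2e^{134} + √2 e^{127} + √2 e^{235} − 4e^{125}. Hence dτ₅ = λφ₅ + L_D φ₅, i.e. (n₅, φ₅) is an expanding semi-algebraic Laplacian soliton, since dτ₅ = Δ_{φ₅} φ₅. -/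

import Mathlib

/-! Every identity is a polynomial identity in the coordinates of the arguments and `√2`: the
Chevalley–Eilenberg differential of a 2- or 3-form and the Lie derivative of a 3-form expand into
finitely many terms, the basic forms into 2×2 and 3×3 determinants, and the bracket and `D` are
given by coordinate formulas. In `dτ₅`, `√2` enters only through `(√2)² = 2`. -/

noncomputable section

/-- `ℝ⁷` with its standard basis. -/
abbrev V7 := Fin 7 → ℝ

/-- `e^{i₁…i_k}`, the wedge of dual-basis covectors, in the determinant convention:
`(e^{i₁}∧…∧e^{i_k})(X₁,…,X_k) = det (Xₚ)_{i_q}`. -/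
def wE {k : ℕ} (idx : Fin k → Fin 7) (X : Fin k → V7) : ℝ :=
  Matrix.det (Matrix.of fun p q : Fin k => X p (idx q))

/-- The index in `{0, …, k}` of the `m`-th element (0-based) of `{0, …, k} \ {i, j}`,
assuming `i < j`. -/
def skip2 (i j m : ℕ) : ℕ := if m < i then m else if m < j - 1 then m + 1 else m + 2

/-- The Chevalley–Eilenberg differential of a `k`-form `ψ` with respect to a bracket `br`:
`dψ(X₁,…,X_{k+1}) = Σ_{i<j} (−1)^{i+j} ψ([Xᵢ,Xⱼ], X₁,…,X̂ᵢ,…,X̂ⱼ,…,X_{k+1})`. -/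
def CEd {V : Type*} (br : V → V → V) {k : ℕ} (ψ : (Fin k → V) → ℝ)
    (X : Fin (k + 1) → V) : ℝ :=
  ∑ i : Fin (k + 1), ∑ j : Fin (k + 1),
    if (i : ℕ) < (j : ℕ) then
      (-1 : ℝ) ^ ((i : ℕ) + (j : ℕ)) *
        ψ (fun l => if (l : ℕ) = 0 then br (X i) (X j)
          else X ⟨min (skip2 (i : ℕ) (j : ℕ) ((l : ℕ) - 1)) k,
            Nat.lt_succ_of_le (Nat.min_le_right _ _)⟩)
    else 0

/-- The algebraic Lie derivative of a `k`-form with respect to an endomorphism `D`: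
`(L_D ψ)(X₁,…,X_k) = ψ(DX₁,X₂,…,X_k) + … + ψ(X₁,…,X_{k−1},DX_k)`. -/
def LD {V : Type*} (D : V → V) {k : ℕ} (ψ : (Fin k → V) → ℝ) (X : Fin k → V) : ℝ :=
  ∑ i : Fin k, ψ (Function.update X i (D (X i)))

/-- The Lie bracket of `n₅`: `[e₁,e₂] = −√2 e₃`, `[e₁,e₃] = −e₆`, `[e₁,e₄] = −e₇`,
`[e₂,e₅] = −√2 e₇`. -/
def br5 (X Y : V7) : V7 :=
  ![0, 0, -Real.sqrt 2 * (X 0 * Y 1 - X 1 * Y 0), 0, 0, -(X 0 * Y 2 - X 2 * Y 0),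
    -(X 0 * Y 3 - X 3 * Y 0) - Real.sqrt 2 * (X 1 * Y 4 - X 4 * Y 1)]

/-- `φ₅ = e^{134}+e^{457}−e^{246}−e^{125}−e^{356}+e^{167}−e^{237}`. -/
def phi5 : (Fin 3 → V7) → ℝ := fun X =>
  wE ![0, 2, 3] X + wE ![3, 4, 6] X - wE ![1, 3, 5] X - wE ![0, 1, 4] X
    - wE ![2, 4, 5] X + wE ![0, 5, 6] X - wE ![1, 2, 6] X

/-- `τ₅ = −e^{46} + e^{37} − √2 e^{35} + √2 e^{17}`. -/
def tau5 : (Fin 2 → V7) → ℝ := fun X =>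
  -wE ![3, 5] X + wE ![2, 6] X - Real.sqrt 2 * wE ![2, 4] X + Real.sqrt 2 * wE ![0, 6] X

/-- `De₁ = −e₁ + √2 e₃`, `De₂ = −2e₂`, `De₃ = −3e₃`, `De₄ = −3e₄`, `De₅ = −2e₅ − √2 e₇`,
`De₆ = −4e₆`, `De₇ = −4e₇`. -/
def D5 (X : V7) : V7 :=
  ![-X 0, -2 * X 1, Real.sqrt 2 * X 0 - 3 * X 2, -3 * X 3, -2 * X 4, -4 * X 5,
    -Real.sqrt 2 * X 4 - 4 * X 6]

section

variable {V : Type*}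

theorem CEd_two_apply (br : V → V → V) (ψ : (Fin 2 → V) → ℝ) (X : Fin 3 → V) :
    CEd br ψ X = -ψ ![br (X 0) (X 1), X 2] + ψ ![br (X 0) (X 2), X 1]
      - ψ ![br (X 1) (X 2), X 0] := by
  simp only [CEd, Fin.sum_univ_succ, Fin.sum_univ_zero]
  norm_num [skip2]
  simp only [sub_eq_add_neg, add_assoc]
  congr! <;> rename_i l <;> fin_cases l <;> rfl

theorem CEd_three_apply (br : V → V → V) (ψ : (Fin 3 → V) → ℝ) (X : Fin 4 → V) :
    CEd br ψ X = -ψ ![br (X 0) (X 1), X 2, X 3] + ψ ![br (X 0) (X 2), X 1, X 3]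
      - ψ ![br (X 0) (X 3), X 1, X 2] - ψ ![br (X 1) (X 2), X 0, X 3]
      + ψ ![br (X 1) (X 3), X 0, X 2] - ψ ![br (X 2) (X 3), X 0, X 1] := by
  simp only [CEd, Fin.sum_univ_succ, Fin.sum_univ_zero]
  norm_num [skip2]
  simp only [sub_eq_add_neg, add_assoc]
  congr! <;> rename_i l <;> fin_cases l <;> rfl

theorem LD_three_apply (D : V → V) (ψ : (Fin 3 → V) → ℝ) (X : Fin 3 → V) :
    LD D ψ X = ψ ![D (X 0), X 1, X 2] + ψ ![X 0, D (X 1), X 2] + ψ ![X 0, X 1, D (X 2)] := by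
  simp only [LD, Fin.sum_univ_three]
  congr! <;> funext l <;> fin_cases l <;> rfl

end

theorem wE_two_apply (idx : Fin 2 → Fin 7) (X : Fin 2 → V7) :
    wE idx X = X 0 (idx 0) * X 1 (idx 1) - X 0 (idx 1) * X 1 (idx 0) :=
  Matrix.det_fin_two _

theorem wE_three_apply (idx : Fin 3 → Fin 7) (X : Fin 3 → V7) :
    wE idx X = X 0 (idx 0) * X 1 (idx 1) * X 2 (idx 2) - X 0 (idx 0) * X 1 (idx 2) * X 2 (idx 1)
      - X 0 (idx 1) * X 1 (idx 0) * X 2 (idx 2) + X 0 (idx 1) * X 1 (idx 2) * X 2 (idx 0)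
      + X 0 (idx 2) * X 1 (idx 0) * X 2 (idx 1) - X 0 (idx 2) * X 1 (idx 1) * X 2 (idx 0) :=
  Matrix.det_fin_three _

theorem CEd_br5_phi5 : CEd br5 phi5 = fun _ => (0 : ℝ) := by
  funext X
  simp only [CEd_three_apply, phi5, wE_three_apply, br5, Matrix.cons_val]
  ring

theorem D5_br5_leibniz (X Y : V7) : D5 (br5 X Y) = br5 (D5 X) Y + br5 X (D5 Y) := by
  funext i
  fin_cases i <;> simp only [D5, br5, Pi.add_apply, Fin.reduceFinMk, Matrix.cons_val] <;> ring

theorem CEd_br5_tau5 : CEd br5 tau5 = fun X =>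
    2 * wE ![0, 2, 3] X + Real.sqrt 2 * wE ![0, 1, 6] X
      + Real.sqrt 2 * wE ![1, 2, 4] X - 4 * wE ![0, 1, 4] X := by
  funext X
  simp only [CEd_two_apply, tau5, wE_two_apply, wE_three_apply, br5, Matrix.cons_val]
  ring_nf
  rw [Real.sq_sqrt zero_le_two]
  ring

theorem nine_mul_phi5_add_LD_D5_phi5 : (fun X => 9 * phi5 X + LD D5 phi5 X) = fun X =>
    2 * wE ![0, 2, 3] X + Real.sqrt 2 * wE ![0, 1, 6] X
      + Real.sqrt 2 * wE ![1, 2, 4] X - 4 * wE ![0, 1, 4] X := by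
  funext X
  simp only [LD_three_apply, phi5, wE_three_apply, D5, Matrix.cons_val]
  ring

/-- `(n₅, φ₅)` is an expanding semi-algebraic Laplacian soliton with `λ = 9`:
(i) `dφ₅ = 0`; (ii) `D` is a derivation;
(iii) `dτ₅ = 2e^{134} + √2 e^{127} + √2 e^{235} − 4e^{125}`;
(iv) `λφ₅ + L_D φ₅` equals the same 3-form; hence `dτ₅ = λφ₅ + L_D φ₅` with `λ > 0`. -/
theorem n5_semialgebraic_soliton :
    (CEd br5 phi5 = fun _ => (0 : ℝ)) ∧
      (∀ X Y : V7, D5 (br5 X Y) = br5 (D5 X) Y + br5 X (D5 Y)) ∧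
      (CEd br5 tau5 = fun X =>
        2 * wE ![0, 2, 3] X + Real.sqrt 2 * wE ![0, 1, 6] X
          + Real.sqrt 2 * wE ![1, 2, 4] X - 4 * wE ![0, 1, 4] X) ∧
      ((fun X => 9 * phi5 X + LD D5 phi5 X) = fun X =>
        2 * wE ![0, 2, 3] X + Real.sqrt 2 * wE ![0, 1, 6] X
          + Real.sqrt 2 * wE ![1, 2, 4] X - 4 * wE ![0, 1, 4] X) ∧
      (CEd br5 tau5 = fun X => 9 * phi5 X + LD D5 phi5 X) ∧
      (0 : ℝ) < 9 :=
  ⟨CEd_br5_phi5, D5_br5_leibniz, CEd_br5_tau5, nine_mul_phi5_add_LD_D5_phi5,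
    CEd_br5_tau5.trans nine_mul_phi5_add_LD_D5_phi5.symm, by norm_num⟩
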